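/- For each κ > 0 and each real p ≥ 3, the map t ↦ f_κ(t)^p f_κ'(t)/t is strictly increasing on (0,∞) and tends to 0 as t → 0⁺, where f_κ'(t) = (1 + 2κ f_κ(t)²)^{-1/2}. -/

import Mathlib

/-!
Put `s = f_κ(t)`, so `t = F_κ(s)`, and substitute `u = s v` in `F_κ(s) = ∫₀ˢ √(1 + 2κu²) du`:
`F_κ(s) = s² G(s)` with `G(s) = ∫₀¹ √(1/s² + 2κv²) dv`. Since also
`√(1 + 2κs²) = s √(1/s² + 2κ)`, the map becomes
`s ^ (p - 3) / (√(1/s² + 2κ) G(s))`: for `p ≥ 3` the numerator is nondecreasing and the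
denominator strictly decreasing in `s`, and `s = f_κ(t)` is strictly increasing in `t`.
For the limit, `F_κ(s) ≥ s` gives `f_κ(t) ≤ t`, so the map is squeezed between `0` and `t ^ (p - 1)`.
-/

open Real Filter Set

/-- `Fk κ t = ∫₀ᵗ √(1 + 2κ s²) ds`. -/
noncomputable def Fk (κ t : ℝ) : ℝ := ∫ s in (0:ℝ)..t, Real.sqrt (1 + 2*κ*s^2)

/-- `f` is the inverse of `Fk κ` on `[0,∞)`. -/
def IsInvF (κ : ℝ) (f : ℝ → ℝ) : Prop :=
  (∀ s, 0 ≤ s → f (Fk κ s) = s) ∧ ∀ t, 0 ≤ t → 0 ≤ f t ∧ Fk κ (f t) = t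

/-- The derivative formula `f_κ'(t) = (1 + 2κ f_κ(t)²)^{-1/2}`. -/
noncomputable def fd (κ : ℝ) (f : ℝ → ℝ) (t : ℝ) : ℝ :=
  1 / Real.sqrt (1 + 2*κ*(f t)^2)

lemma continuous_sqrt_one_add_mul_sq (κ : ℝ) : Continuous fun s : ℝ => √(1 + 2*κ*s^2) := by
  fun_prop

lemma Fk_zero (κ : ℝ) : Fk κ 0 = 0 := by
  simp [Fk]

lemma Fk_sub_Fk (κ a b : ℝ) : Fk κ b - Fk κ a = ∫ s in a..b, √(1 + 2*κ*s^2) :=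
  intervalIntegral.integral_interval_sub_left
    ((continuous_sqrt_one_add_mul_sq κ).intervalIntegrable _ _)
    ((continuous_sqrt_one_add_mul_sq κ).intervalIntegrable _ _)

lemma sub_le_Fk_sub {κ a b : ℝ} (hκ : 0 ≤ κ) (hab : a ≤ b) : b - a ≤ Fk κ b - Fk κ a := by
  rw [Fk_sub_Fk]
  calc b - a = ∫ _ in a..b, (1 : ℝ) := by simp
    _ ≤ ∫ s in a..b, √(1 + 2*κ*s^2) :=
      intervalIntegral.integral_mono_on hab intervalIntegrable_const
        ((continuous_sqrt_one_add_mul_sq κ).intervalIntegrable _ _)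
        fun s _ => one_le_sqrt.2 (le_add_of_nonneg_right (by positivity))

lemma strictMono_Fk {κ : ℝ} (hκ : 0 ≤ κ) : StrictMono (Fk κ) := fun a b hab => by
  linarith [sub_le_Fk_sub hκ hab.le]

lemma self_le_Fk {κ s : ℝ} (hκ : 0 ≤ κ) (hs : 0 ≤ s) : s ≤ Fk κ s := by
  simpa [Fk_zero] using sub_le_Fk_sub hκ hs

/-- `Fk κ s / s²` for `s > 0`, written so that its monotonicity in `s` is visible. -/
noncomputable def Gk (κ s : ℝ) : ℝ := ∫ v in (0:ℝ)..1, √(1/s^2 + 2*κ*v^2)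

lemma sqrt_one_add_mul_sq_eq (c : ℝ) {s : ℝ} (hs : 0 < s) :
    √(1 + c * s^2) = s * √(1/s^2 + c) := by
  rw [← sqrt_sq hs.le, ← sqrt_mul (sq_nonneg s), sqrt_sq hs.le]
  congr 1
  field_simp

lemma Fk_eq_sq_mul_Gk (κ : ℝ) {s : ℝ} (hs : 0 < s) : Fk κ s = s^2 * Gk κ s := by
  have hsub : ∫ v in (0:ℝ)..1, √(1 + 2*κ*(s*v)^2) = s⁻¹ * ∫ u in (0:ℝ)..s, √(1 + 2*κ*u^2) := by
    simpa using intervalIntegral.integral_comp_mul_left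
      (a := 0) (b := 1) (fun u : ℝ => √(1 + 2*κ*u^2)) hs.ne'
  have hscale (v : ℝ) : √(1 + 2*κ*(s*v)^2) = s * √(1/s^2 + 2*κ*v^2) := by
    rw [← sqrt_one_add_mul_sq_eq _ hs]
    ring_nf
  simp_rw [hscale, intervalIntegral.integral_const_mul] at hsub
  rw [eq_inv_mul_iff_mul_eq₀ hs.ne'] at hsub
  rw [Fk, Gk, ← hsub]
  ring

lemma Gk_pos {κ s : ℝ} (hκ : 0 ≤ κ) (hs : 0 < s) : 0 < Gk κ s := by
  have := self_le_Fk hκ hs.le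
  rw [Fk_eq_sq_mul_Gk κ hs] at this
  exact pos_of_mul_pos_right (by linarith) (sq_nonneg s)

lemma Gk_antitoneOn (κ : ℝ) : AntitoneOn (Gk κ) (Ioi 0) := fun a (ha : 0 < a) b _ hab =>
  intervalIntegral.integral_mono_on zero_le_one (by apply Continuous.intervalIntegrable; fun_prop)
    (by apply Continuous.intervalIntegrable; fun_prop) fun v _ => by gcongr

lemma strictAntiOn_sqrt_one_div_sq_add {c : ℝ} (hc : 0 ≤ c) :
    StrictAntiOn (fun s : ℝ => √(1/s^2 + c)) (Ioi 0) := fun a (ha : 0 < a) b _ hab =>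
  sqrt_lt_sqrt (by positivity) (by gcongr)

/-- The map of the theorem in the variable `s = f_κ(t)`. -/
noncomputable def profile (κ p s : ℝ) : ℝ := s ^ p / (√(1 + 2*κ*s^2) * Fk κ s)

lemma profile_eq {κ p s : ℝ} (hs : 0 < s) :
    profile κ p s = s ^ (p - 3) / (√(1/s^2 + 2*κ) * Gk κ s) := by
  rw [profile, sqrt_one_add_mul_sq_eq _ hs, Fk_eq_sq_mul_Gk κ hs, rpow_sub hs, rpow_ofNat]
  field_simp

lemma strictMonoOn_profile {κ p : ℝ} (hκ : 0 ≤ κ) (hp : 3 ≤ p) :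
    StrictMonoOn (profile κ p) (Ioi 0) := by
  intro a (ha : 0 < a) b (hb : 0 < b) hab
  have hden_pos : 0 < √(1/b^2 + 2*κ) * Gk κ b := by
    have := Gk_pos hκ hb
    positivity
  have hden : √(1/b^2 + 2*κ) * Gk κ b < √(1/a^2 + 2*κ) * Gk κ a :=
    mul_lt_mul_of_lt_of_le_of_nonneg_of_pos
      (strictAntiOn_sqrt_one_div_sq_add (by positivity) ha hb hab)
      (Gk_antitoneOn κ ha hb hab.le) (sqrt_nonneg _) (Gk_pos hκ ha)
  rw [profile_eq ha, profile_eq hb]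
  calc a ^ (p - 3) / (√(1/a^2 + 2*κ) * Gk κ a)
      ≤ b ^ (p - 3) / (√(1/a^2 + 2*κ) * Gk κ a) := by
        gcongr
        exact (hden_pos.trans hden).le
    _ < b ^ (p - 3) / (√(1/b^2 + 2*κ) * Gk κ b) :=
      div_lt_div_of_pos_left (rpow_pos_of_pos hb _) hden_pos hden

lemma fd_nonneg (κ : ℝ) (f : ℝ → ℝ) (t : ℝ) : 0 ≤ fd κ f t := by
  unfold fd; positivity

lemma fd_le_one {κ : ℝ} (hκ : 0 ≤ κ) (f : ℝ → ℝ) (t : ℝ) : fd κ f t ≤ 1 :=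
  div_le_one_of_le₀ (one_le_sqrt.2 (le_add_of_nonneg_right (by positivity))) (sqrt_nonneg _)

namespace IsInvF

variable {κ : ℝ} {f : ℝ → ℝ}

lemma pos (hf : IsInvF κ f) {t : ℝ} (ht : 0 < t) : 0 < f t := by
  obtain ⟨hf0, hFf⟩ := hf.2 t ht.le
  refine hf0.lt_of_ne fun h => ?_
  rw [← h, Fk_zero] at hFf
  exact ht.ne hFf

lemma strictMonoOn (hκ : 0 ≤ κ) (hf : IsInvF κ f) : StrictMonoOn f (Ici 0) := by
  intro a ha b hb hab
  rwa [← (strictMono_Fk hκ).lt_iff_lt, (hf.2 a ha).2, (hf.2 b hb).2]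

lemma le_self (hκ : 0 ≤ κ) (hf : IsInvF κ f) {t : ℝ} (ht : 0 ≤ t) : f t ≤ t := by
  obtain ⟨hf0, hFf⟩ := hf.2 t ht
  calc f t ≤ Fk κ (f t) := self_le_Fk hκ hf0
    _ = t := hFf

lemma apply_eq_profile (hf : IsInvF κ f) (p : ℝ) {t : ℝ} (ht : 0 ≤ t) :
    f t ^ p * fd κ f t / t = profile κ p (f t) := by
  rw [profile, (hf.2 t ht).2, fd]
  ring

lemma le_rpow_sub_one (hκ : 0 ≤ κ) (hf : IsInvF κ f) {p t : ℝ} (hp : 0 ≤ p) (ht : 0 < t) :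
    f t ^ p * fd κ f t / t ≤ t ^ (p - 1) := by
  rw [rpow_sub_one ht.ne']
  gcongr
  calc f t ^ p * fd κ f t ≤ f t ^ p * 1 :=
        mul_le_mul_of_nonneg_left (fd_le_one hκ f t) (rpow_nonneg (hf.2 t ht.le).1 p)
    _ ≤ t ^ p := by
        rw [mul_one]
        exact rpow_le_rpow (hf.2 t ht.le).1 (hf.le_self hκ ht.le) hp

end IsInvF

theorem stmt_10 (κ : ℝ) (hκ : 0 < κ) (p : ℝ) (hp : 3 ≤ p)
    (f : ℝ → ℝ) (hf : IsInvF κ f) :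
    StrictMonoOn (fun t => (f t) ^ p * fd κ f t / t) (Set.Ioi 0) ∧
    Filter.Tendsto (fun t => (f t) ^ p * fd κ f t / t)
      (nhdsWithin 0 (Set.Ioi 0)) (nhds 0) := by
  constructor
  · intro a ha b hb hab
    simp only [hf.apply_eq_profile p ha.out.le, hf.apply_eq_profile p hb.out.le]
    exact strictMonoOn_profile hκ.le hp (hf.pos ha) (hf.pos hb)
      (hf.strictMonoOn hκ.le ha.out.le hb.out.le hab)
  · have hpow : Tendsto (fun t : ℝ => t ^ (p - 1)) (nhdsWithin 0 (Ioi 0)) (nhds 0) := by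
      have := (continuousAt_rpow_const 0 (p - 1) (Or.inr (by linarith))).tendsto
      rw [zero_rpow (by linarith)] at this
      exact this.mono_left nhdsWithin_le_nhds
    refine tendsto_of_tendsto_of_tendsto_of_le_of_le' tendsto_const_nhds hpow
      (eventually_nhdsWithin_of_forall fun t ht => ?_)
      (eventually_nhdsWithin_of_forall fun t ht => hf.le_rpow_sub_one hκ.le (by linarith) ht)
    have ht' : 0 < t := ht
    have := (hf.2 t ht'.le).1
    have := fd_nonneg κ f t
    positivity
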